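/- arXiv:2601.03764 — 2 statements merged into one kernel-verified Lean document; each statement's English description precedes it below -/
import Mathlib

section
/- Let β > 0 and c > 0, and define L(k) = (1/Γ(β/2)) ∫₀^∞ e^{−k c √τ} τ^{β/2 − 1} e^{−τ} dτ. Then L(k) · k^β → 2Γ(β)/(Γ(β/2) c^β) as k → ∞. -/
open MeasureTheory Real Set Filter Topology

/-! Substituting `τ = (v / k)²` turns the integral into
`2 k^(-β) ∫₀^∞ v^(β-1) e^(-c v) e^(-(v/k)²) dv`. As `k → ∞` the Gaussian factor tends to `1`
under the integrable dominant `v^(β-1) e^(-c v)`, so by dominated convergence `L(k) k^β` tends to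
`(2 / Γ(β/2)) ∫₀^∞ v^(β-1) e^(-c v) dv = 2 Γ(β) / (Γ(β/2) c^β)`. -/

theorem integral_Ioi_rpow_mul_comp_sqrt (g : ℝ → ℝ) (s : ℝ) :
    ∫ τ in Ioi (0 : ℝ), τ ^ (s / 2 - 1) * g √τ = 2 * ∫ x in Ioi (0 : ℝ), x ^ (s - 1) * g x := by
  rw [← integral_comp_rpow_Ioi_of_pos two_pos, ← integral_const_mul]
  refine setIntegral_congr_fun measurableSet_Ioi fun x (hx : 0 < x) => ?_
  have hpow : x ^ ((2 : ℝ) - 1) * (x ^ (2 : ℝ)) ^ (s / 2 - 1) = x ^ (s - 1) := by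
    rw [← rpow_mul hx.le, ← rpow_add hx]
    ring_nf
  rw [smul_eq_mul, rpow_two, sqrt_sq hx.le, ← rpow_two, ← hpow]
  ring

theorem integral_Ioi_rpow_mul_comp_mul_left (g : ℝ → ℝ) (s : ℝ) {k : ℝ} (hk : 0 < k) :
    ∫ x in Ioi (0 : ℝ), x ^ (s - 1) * g (k * x) = k ^ (-s) * ∫ v in Ioi (0 : ℝ), v ^ (s - 1) * g v := by
  calc ∫ x in Ioi (0 : ℝ), x ^ (s - 1) * g (k * x)
      = k ^ (-(s - 1)) * ∫ x in Ioi (0 : ℝ), (k * x) ^ (s - 1) * g (k * x) := by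
        rw [← integral_const_mul]
        refine setIntegral_congr_fun measurableSet_Ioi fun x (hx : 0 < x) => ?_
        rw [mul_rpow hk.le hx.le, ← mul_assoc, ← mul_assoc, ← rpow_add hk, neg_add_cancel,
          rpow_zero, one_mul]
    _ = k ^ (-(s - 1)) * (k⁻¹ * ∫ v in Ioi (0 : ℝ), v ^ (s - 1) * g v) := by
        rw [integral_comp_mul_left_Ioi (fun v => v ^ (s - 1) * g v) 0 hk, mul_zero, smul_eq_mul]
    _ = k ^ (-s) * ∫ v in Ioi (0 : ℝ), v ^ (s - 1) * g v := by
        rw [← mul_assoc, ← rpow_neg_one, ← rpow_add hk]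
        ring_nf

theorem integral_Ioi_rpow_mul_comp_mul_sqrt (g : ℝ → ℝ) (s : ℝ) {k : ℝ} (hk : 0 < k) :
    ∫ τ in Ioi (0 : ℝ), τ ^ (s / 2 - 1) * g (k * √τ)
      = 2 * k ^ (-s) * ∫ v in Ioi (0 : ℝ), v ^ (s - 1) * g v := by
  rw [integral_Ioi_rpow_mul_comp_sqrt (fun x => g (k * x)),
    integral_Ioi_rpow_mul_comp_mul_left g s hk, mul_assoc]

theorem tendsto_integral_mul_exp_neg_div_sq {μ : Measure ℝ} {h : ℝ → ℝ} (hh : Integrable h μ) :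
    Tendsto (fun k : ℝ => ∫ v, h v * exp (-(v / k) ^ 2) ∂μ) atTop (𝓝 (∫ v, h v ∂μ)) := by
  refine tendsto_integral_filter_of_dominated_convergence (fun v => ‖h v‖)
    (.of_forall fun k => hh.aestronglyMeasurable.mul (by fun_prop : Continuous _).aestronglyMeasurable)
    (.of_forall fun k => .of_forall fun v => ?_) hh.norm (.of_forall fun v => ?_)
  · rw [norm_mul, norm_of_nonneg (exp_pos _).le]
    exact mul_le_of_le_one_right (norm_nonneg _) (exp_le_one_iff.2 (by nlinarith))
  · have hvk : Tendsto (fun k : ℝ => v / k) atTop (𝓝 0) := tendsto_const_nhds.div_atTop tendsto_id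
    have hφ := ((by fun_prop : Continuous fun t : ℝ => h v * exp (-t ^ 2)).tendsto 0).comp hvk
    simpa [Function.comp_def] using hφ

/-- Bias-free pass@k tail: with
L(k) = (1/Γ(β/2)) ∫₀^∞ e^(−k c √τ) τ^(β/2−1) e^(−τ) dτ,
we have L(k) k^β → 2Γ(β)/(Γ(β/2) c^β) as k → ∞. -/
theorem bias_free_passk_tail (β c : ℝ) (hβ : 0 < β) (hc : 0 < c) :
    Tendsto
      (fun k : ℝ =>
        ((1 / Real.Gamma (β / 2)) *
          ∫ τ in Ioi (0 : ℝ),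
            Real.exp (-(k * c * Real.sqrt τ)) * τ ^ (β / 2 - 1) * Real.exp (-τ)) *
        k ^ β)
      atTop (nhds (2 * Real.Gamma β / (Real.Gamma (β / 2) * c ^ β))) := by
  have hdom : IntegrableOn (fun v => v ^ (β - 1) * exp (-(c * v))) (Ioi 0) := by
    simpa [neg_mul] using integrableOn_rpow_mul_exp_neg_mul_rpow (by linarith) one_pos hc
  have hlim := (tendsto_integral_mul_exp_neg_div_sq hdom).const_mul (2 / Gamma (β / 2))
  rw [integral_rpow_mul_exp_neg_mul_Ioi hβ hc] at hlim
  convert hlim.congr' ?_ using 2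
  · rw [one_div c, inv_rpow hc.le]
    ring
  filter_upwards [eventually_gt_atTop 0] with k hk
  have hsubst : ∫ τ in Ioi (0 : ℝ), exp (-(k * c * √τ)) * τ ^ (β / 2 - 1) * exp (-τ)
      = 2 * k ^ (-β) * ∫ v in Ioi (0 : ℝ), v ^ (β - 1) * exp (-(c * v)) * exp (-(v / k) ^ 2) := by
    convert integral_Ioi_rpow_mul_comp_mul_sqrt
      (fun v => exp (-(c * v)) * exp (-(v / k) ^ 2)) β hk using 1
    · refine setIntegral_congr_fun measurableSet_Ioi fun τ (hτ : 0 < τ) => ?_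
      rw [mul_div_cancel_left₀ _ hk.ne', sq_sqrt hτ.le]
      ring_nf
    · simp only [mul_assoc]
  have hk_cancel : k ^ (-β) * k ^ β = 1 := by rw [← rpow_add hk, neg_add_cancel, rpow_zero]
  rw [hsubst]
  linear_combination (-(2 / Gamma (β / 2)) *
    ∫ v in Ioi (0 : ℝ), v ^ (β - 1) * exp (-(c * v)) * exp (-(v / k) ^ 2)) * hk_cancel
end

section
/- Let S be a random variable taking values in [0,1] whose distribution function satisfies P(S ≤ s) = A s^β + B s^γ for all s ∈ [0,1], where A, B ≥ 0, A + B = 1, and 0 < β < γ. Then E[(1−S)^k] · k^β → A Γ(β+1) as k → ∞. -/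
open MeasureTheory Real Set Filter ProbabilityTheory
open scoped Nat Topology NNReal ENNReal

lemma Gamma_prod {s : ℝ} (hs : 0 < s) (n : ℕ) :
    Real.Gamma (s + n + 1) = Real.Gamma s * ∏ j ∈ Finset.range (n + 1), (s + j) := by
  induction n with
  | zero => simp [Real.Gamma_add_one hs.ne']; ring
  | succ n ih =>
    rw [Finset.prod_range_succ, ← mul_assoc, ← ih]
    have h1 : s + (↑(n+1) : ℝ) + 1 = (s + n + 1) + 1 := by push_cast; ring
    rw [h1, Real.Gamma_add_one (by positivity)]
    push_cast; ring

lemma ratio_tendsto {s : ℝ} (hs : 0 < s) :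
    Tendsto (fun n : ℕ => (n:ℝ) ^ s * n ! / Real.Gamma (s + n + 1)) atTop (𝓝 1) := by
  have hG : Real.Gamma s ≠ 0 := (Real.Gamma_pos_of_pos hs).ne'
  have h := (Real.GammaSeq_tendsto_Gamma s).div_const (Real.Gamma s)
  rw [div_self hG] at h
  refine h.congr fun n => ?_
  have hprod : (0:ℝ) < ∏ j ∈ Finset.range (n + 1), (s + j) :=
    Finset.prod_pos fun j _ => by positivity
  rw [Real.GammaSeq, Gamma_prod hs n]
  field_simp

lemma beta_eval {s : ℝ} (hs : 0 < s) (k : ℕ) :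
    ∫ x in (0:ℝ)..1, x ^ (s - 1) * (1 - x) ^ k
      = Real.Gamma s * k ! / Real.Gamma (s + k + 1) := by
  have hre : 0 < Complex.re (s : ℂ) := by simpa using hs
  have hre2 : 0 < Complex.re ((k:ℂ) + 1) := by simp; positivity
  have h := Complex.Gamma_mul_Gamma_eq_betaIntegral hre hre2
  have hbeta : Complex.betaIntegral (s : ℂ) ((k:ℂ) + 1)
      = ((∫ x in (0:ℝ)..1, x ^ (s - 1) * (1 - x) ^ k : ℝ) : ℂ) := by
    rw [Complex.betaIntegral, ← intervalIntegral.integral_ofReal]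
    rw [intervalIntegral.integral_of_le zero_le_one, intervalIntegral.integral_of_le zero_le_one]
    refine setIntegral_congr_fun measurableSet_Ioc fun x hx => ?_
    have hx0 : (0:ℝ) ≤ x := hx.1.le
    rw [add_sub_cancel_right, Complex.cpow_natCast, Complex.ofReal_mul,
      Complex.ofReal_cpow hx0]
    push_cast
    ring
  rw [hbeta] at h
  have hG : (0:ℝ) < Real.Gamma (s + k + 1) := Real.Gamma_pos_of_pos (by positivity)
  have hcast : ((s:ℂ) + ((k:ℂ) + 1)) = ((s + k + 1 : ℝ) : ℂ) := by push_cast; ring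
  rw [hcast, Complex.Gamma_ofReal, Complex.Gamma_ofReal] at h
  have hk : Complex.Gamma ((k:ℂ) + 1) = ((k ! : ℝ) : ℂ) := by
    rw [Complex.Gamma_nat_eq_factorial]; push_cast; ring
  rw [hk] at h
  have h' : Real.Gamma s * k ! = Real.Gamma (s + k + 1) * ∫ x in (0:ℝ)..1, x ^ (s - 1) * (1 - x) ^ k := by
    exact_mod_cast h
  field_simp
  linarith [h']

lemma density_integral {A B β γ : ℝ} (hβ : 0 < β) (hγ : 0 < γ) {a : ℝ} (ha : 0 ≤ a) :
    ∫ x in Ioc (0:ℝ) a, (A * β * x ^ (β-1) + B * γ * x ^ (γ-1)) = A * a ^ β + B * a ^ γ := by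
  rw [← intervalIntegral.integral_of_le ha]
  have h1 : IntervalIntegrable (fun x : ℝ => x ^ (β-1)) volume 0 a :=
    intervalIntegral.intervalIntegrable_rpow' (by linarith)
  have h2 : IntervalIntegrable (fun x : ℝ => x ^ (γ-1)) volume 0 a :=
    intervalIntegral.intervalIntegrable_rpow' (by linarith)
  rw [intervalIntegral.integral_add (h1.const_mul _) (h2.const_mul _),
    intervalIntegral.integral_const_mul, intervalIntegral.integral_const_mul,
    integral_rpow (Or.inl (by linarith)), integral_rpow (Or.inl (by linarith)),
    sub_add_cancel, sub_add_cancel, Real.zero_rpow hβ.ne', Real.zero_rpow hγ.ne']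
  field_simp
  ring

lemma density_integrable {A B β γ : ℝ} (hβ : 0 < β) (hγ : 0 < γ) {a : ℝ} (ha : 0 ≤ a) :
    IntegrableOn (fun x : ℝ => A * β * x ^ (β-1) + B * γ * x ^ (γ-1)) (Ioc 0 a) volume := by
  have h1 : IntervalIntegrable (fun x : ℝ => x ^ (β-1)) volume 0 a :=
    intervalIntegral.intervalIntegrable_rpow' (by linarith)
  have h2 : IntervalIntegrable (fun x : ℝ => x ^ (γ-1)) volume 0 a :=
    intervalIntegral.intervalIntegrable_rpow' (by linarith)
  exact (intervalIntegrable_iff_integrableOn_Ioc_of_le ha).mp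
    ((h1.const_mul _).add (h2.const_mul _))

lemma density_nonneg {A B β γ : ℝ} (hA : 0 ≤ A) (hB : 0 ≤ B) (hβ : 0 < β) (hγ : 0 < γ)
    {x : ℝ} (hx : 0 ≤ x) : 0 ≤ A * β * x ^ (β-1) + B * γ * x ^ (γ-1) := by
  have := Real.rpow_nonneg hx (β-1)
  have := Real.rpow_nonneg hx (γ-1)
  positivity

lemma map_eq_density {Ω : Type*} [MeasurableSpace Ω] (μ : Measure Ω) [IsProbabilityMeasure μ]
    (S : Ω → ℝ) (hSm : Measurable S) (hS01 : ∀ ω, S ω ∈ Icc (0 : ℝ) 1)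
    (A B β γ : ℝ) (hA : 0 ≤ A) (hB : 0 ≤ B)
    (hβ : 0 < β) (hγ : 0 < γ)
    (hcdf : ∀ s ∈ Icc (0 : ℝ) 1, (μ {ω | S ω ≤ s}).toReal = A * s ^ β + B * s ^ γ) :
    μ.map S = (volume.restrict (Ioc (0:ℝ) 1)).withDensity
      (fun x => ENNReal.ofReal (A * β * x ^ (β-1) + B * γ * x ^ (γ-1))) := by
  have : IsProbabilityMeasure (μ.map S) := Measure.isProbabilityMeasure_map hSm.aemeasurable
  refine Measure.ext_of_Iic _ _ fun a => ?_
  rw [Measure.map_apply hSm measurableSet_Iic,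
    withDensity_apply _ measurableSet_Iic, Measure.restrict_restrict measurableSet_Iic]
  rcases lt_or_ge a 0 with h | h
  · have h1 : S ⁻¹' Iic a = ∅ := by
      ext ω; simp only [mem_preimage, mem_Iic, mem_empty_iff_false, iff_false, not_le]
      exact lt_of_lt_of_le h (hS01 ω).1
    have h2 : Iic a ∩ Ioc (0:ℝ) 1 = ∅ := by
      ext x; simp only [mem_inter_iff, mem_Iic, mem_Ioc, mem_empty_iff_false, iff_false]
      rintro ⟨hxa, hx0, -⟩; linarith
    rw [h1, h2]
    simp
  · set b := min a 1 with hbdef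
    have hb0 : 0 ≤ b := le_min h zero_le_one
    have hb1 : b ≤ 1 := min_le_right _ _
    have hset : S ⁻¹' Iic a = {ω | S ω ≤ b} := by
      ext ω; simp only [mem_preimage, mem_Iic, mem_setOf_eq, hbdef, le_min_iff]
      exact ⟨fun hh => ⟨hh, (hS01 ω).2⟩, fun hh => hh.1⟩
    have hIic : Iic a ∩ Ioc (0:ℝ) 1 = Ioc 0 b := by
      ext x
      simp only [mem_inter_iff, mem_Iic, mem_Ioc, hbdef, le_min_iff]
      tauto
    rw [hset, hIic,
      ← ofReal_integral_eq_lintegral_ofReal (density_integrable hβ hγ hb0)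
        ((ae_restrict_iff' measurableSet_Ioc).mpr
          (ae_of_all _ fun x hx => density_nonneg hA hB hβ hγ hx.1.le)),
      density_integral hβ hγ hb0, ← hcdf b ⟨hb0, hb1⟩,
      ENNReal.ofReal_toReal (measure_ne_top μ _)]

lemma passk_formula {Ω : Type*} [MeasurableSpace Ω] (μ : Measure Ω) [IsProbabilityMeasure μ]
    (S : Ω → ℝ) (hSm : Measurable S) (hS01 : ∀ ω, S ω ∈ Icc (0 : ℝ) 1)
    (A B β γ : ℝ) (hA : 0 ≤ A) (hB : 0 ≤ B)
    (hβ : 0 < β) (hγ : 0 < γ)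
    (hcdf : ∀ s ∈ Icc (0 : ℝ) 1, (μ {ω | S ω ≤ s}).toReal = A * s ^ β + B * s ^ γ)
    (k : ℕ) :
    ∫ ω, (1 - S ω) ^ k ∂μ
      = A * (Real.Gamma (β+1) * k ! / Real.Gamma (β + k + 1))
      + B * (Real.Gamma (γ+1) * k ! / Real.Gamma (γ + k + 1)) := by
  have h1 : ∫ ω, (1 - S ω) ^ k ∂μ = ∫ x, (1 - x) ^ k ∂(μ.map S) := by
    rw [integral_map hSm.aemeasurable]
    exact Measurable.aestronglyMeasurable (by fun_prop)
  rw [h1, map_eq_density μ S hSm hS01 A B β γ hA hB hβ hγ hcdf]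
  have hf : Measurable (fun x : ℝ => Real.toNNReal (A * β * x ^ (β-1) + B * γ * x ^ (γ-1))) := by
    fun_prop
  have hco : (fun x : ℝ => ENNReal.ofReal (A * β * x ^ (β-1) + B * γ * x ^ (γ-1)))
       = (fun x : ℝ => ((Real.toNNReal (A * β * x ^ (β-1) + B * γ * x ^ (γ-1)) : ℝ≥0) : ℝ≥0∞)) :=
    rfl
  rw [hco, integral_withDensity_eq_integral_smul hf]
  have h2 : ∫ x, (Real.toNNReal (A * β * x ^ (β-1) + B * γ * x ^ (γ-1))) • (1 - x) ^ k
        ∂(volume.restrict (Ioc (0:ℝ) 1))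
      = ∫ x in Ioc (0:ℝ) 1,
          (A * β * (x ^ (β-1) * (1 - x) ^ k) + B * γ * (x ^ (γ-1) * (1 - x) ^ k)) := by
    refine setIntegral_congr_fun measurableSet_Ioc fun x hx => ?_
    rw [NNReal.smul_def, Real.coe_toNNReal _ (density_nonneg hA hB hβ hγ hx.1.le), smul_eq_mul]
    ring
  rw [h2, ← intervalIntegral.integral_of_le zero_le_one]
  have hI1 : IntervalIntegrable (fun x : ℝ => x ^ (β-1) * (1-x)^k) volume 0 1 :=
    (intervalIntegral.intervalIntegrable_rpow' (by linarith)).mul_continuousOn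
      (Continuous.continuousOn (by fun_prop))
  have hI2 : IntervalIntegrable (fun x : ℝ => x ^ (γ-1) * (1-x)^k) volume 0 1 :=
    (intervalIntegral.intervalIntegrable_rpow' (by linarith)).mul_continuousOn
      (Continuous.continuousOn (by fun_prop))
  rw [intervalIntegral.integral_add (hI1.const_mul _) (hI2.const_mul _),
    intervalIntegral.integral_const_mul, intervalIntegral.integral_const_mul,
    beta_eval hβ k, beta_eval hγ k,
    Real.Gamma_add_one hβ.ne', Real.Gamma_add_one hγ.ne']
  ring


/-- Two-tail mixture law: if the single-trial success probability S ∈ [0,1] has CDF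
P(S ≤ s) = A s^β + B s^γ on [0,1] with A, B ≥ 0, A + B = 1, 0 < β < γ, then the pass@k
failure probability E[(1−S)^k] satisfies E[(1−S)^k] k^β → A Γ(β+1) as k → ∞. -/
theorem two_tail_mixture_passk
    {Ω : Type*} [MeasurableSpace Ω] (μ : Measure Ω) [IsProbabilityMeasure μ]
    (S : Ω → ℝ) (hSm : Measurable S) (hS01 : ∀ ω, S ω ∈ Icc (0 : ℝ) 1)
    (A B β γ : ℝ) (hA : 0 ≤ A) (hB : 0 ≤ B) (hAB : A + B = 1)
    (hβ : 0 < β) (hβγ : β < γ)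
    (hcdf : ∀ s ∈ Icc (0 : ℝ) 1,
      (μ {ω | S ω ≤ s}).toReal = A * s ^ β + B * s ^ γ) :
    Tendsto (fun k : ℕ => (∫ ω, (1 - S ω) ^ k ∂μ) * (k : ℝ) ^ β)
      atTop (nhds (A * Real.Gamma (β + 1))) := by
  have hγ : 0 < γ := hβ.trans hβγ
  have key : ∀ k : ℕ, (∫ ω, (1 - S ω) ^ k ∂μ) * (k:ℝ)^β
      = A * Real.Gamma (β+1) * ((k:ℝ)^β * k ! / Real.Gamma (β + k + 1))
      + B * Real.Gamma (γ+1) * ((k:ℝ)^β * k ! / Real.Gamma (γ + k + 1)) := by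
    intro k
    rw [passk_formula μ S hSm hS01 A B β γ hA hB hβ hγ hcdf k]
    ring
  have hratβ := ratio_tendsto hβ
  have hratγ := ratio_tendsto hγ
  have h2 : Tendsto (fun k : ℕ => (k:ℝ)^β * k ! / Real.Gamma (γ + k + 1)) atTop (𝓝 0) := by
    have hpow : Tendsto (fun k : ℕ => (k:ℝ) ^ (β - γ)) atTop (𝓝 0) := by
      have h := (tendsto_rpow_neg_atTop (y := γ - β) (by linarith)).comp
        (tendsto_natCast_atTop_atTop (R := ℝ))
      simpa [Function.comp_def, neg_sub] using h
    have h := hpow.mul hratγ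
    rw [zero_mul] at h
    refine h.congr' ?_
    filter_upwards [eventually_gt_atTop 0] with k hk
    have hk0 : (0:ℝ) < (k:ℝ) := by exact_mod_cast hk
    have hadd : (k:ℝ)^β = (k:ℝ)^(β-γ) * (k:ℝ)^γ := by
      rw [← Real.rpow_add hk0, sub_add_cancel]
    rw [hadd]; ring
  have hfinal := (hratβ.const_mul (A * Real.Gamma (β+1))).add
    (h2.const_mul (B * Real.Gamma (γ+1)))
  have heq : A * Real.Gamma (β+1) * 1 + B * Real.Gamma (γ+1) * 0 = A * Real.Gamma (β+1) := by
    ring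
  rw [heq] at hfinal
  exact hfinal.congr fun k => (key k).symm
end
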